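/- arXiv:1804.09002 — 4 statements merged into one kernel-verified Lean document; each statement's English description precedes it below -/
import Mathlib

section
/- Let A ∈ ℂ^{m×n} have rank r and canonical polar decomposition A = U H (U a partial isometry, H = (A*A)^{1/2}, range(U*) = range(H)). Then in any unitarily invariant norm ‖·‖, ‖AA*A − A‖ / (σ₁(A)(1 + σ₁(A))) ≤ ‖A − U‖ ≤ ‖AA*A − A‖ / (σ_r(A)(1 + σ_r(A))), where σ₁(A) and σ_r(A) are the largest and r-th largest singular values of A. -/
open scoped Matrix

lemma key_contract {m n r : ℕ} (Q : Matrix (Fin n) (Fin r) ℂ) (hQ : Qᴴ * Q = 1)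
    (t : Fin r → ℝ) (ht : ∀ k, |t k| ≤ 1)
    (N : Matrix (Fin m) (Fin n) ℂ → ℝ)
    (htri : ∀ X Y, N (X + Y) ≤ N X + N Y)
    (hsmul : ∀ (c : ℂ) X, N (c • X) = ‖c‖ * N X)
    (hinv : ∀ (W : Matrix.unitaryGroup (Fin m) ℂ) (V : Matrix.unitaryGroup (Fin n) ℂ)
      (X : Matrix (Fin m) (Fin n) ℂ),
      N ((W : Matrix (Fin m) (Fin m) ℂ) * X * (V : Matrix (Fin n) (Fin n) ℂ)) = N X)
    (X : Matrix (Fin m) (Fin n) ℂ) (hX : X * (Q * Qᴴ) = X) :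
    N (X * (Q * Matrix.diagonal (fun k => (t k : ℂ)) * Qᴴ)) ≤ N X := by
  set s : Fin r → ℝ := fun k => Real.sqrt (1 - t k ^ 2) with hs
  set E : Fin r → ℂ := fun k => (t k : ℂ) + (s k : ℂ) * Complex.I with hE
  have hsq : ∀ k, (s k : ℝ) ^ 2 = 1 - t k ^ 2 := by
    intro k
    refine Real.sq_sqrt ?_
    nlinarith [ht k, abs_le.1 (ht k), sq_abs (t k)]
  have hEunit : ∀ k, E k * star (E k) = 1 := by
    intro k
    have h1 : star (E k) = (t k : ℂ) - (s k : ℂ) * Complex.I := by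
      simp [hE, Complex.ext_iff]
    rw [h1]
    have : E k * ((t k : ℂ) - (s k : ℂ) * Complex.I)
        = ((t k : ℂ) ^ 2 + (s k : ℂ) ^ 2) := by
      rw [hE]; ring_nf; rw [Complex.I_sq]; ring
    rw [this]
    have h2 : ((t k)^2 + (s k)^2 : ℝ) = 1 := by rw [hsq k]; ring
    exact_mod_cast h2
  set D : Matrix (Fin r) (Fin r) ℂ := Matrix.diagonal E with hD
  set S : Matrix (Fin n) (Fin n) ℂ := 1 - Q * Qᴴ with hS
  have hQS : Qᴴ * S = 0 := by
    rw [hS, Matrix.mul_sub, Matrix.mul_one, ← Matrix.mul_assoc, hQ, Matrix.one_mul, sub_self]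
  have hSQ : S * Q = 0 := by
    rw [hS, Matrix.sub_mul, Matrix.one_mul, Matrix.mul_assoc, hQ, Matrix.mul_one, sub_self]
  have hstarS : Sᴴ = S := by
    simp [hS, Matrix.conjTranspose_sub]
  have hSS : S * S = S := by
    rw [hS]
    rw [Matrix.sub_mul, Matrix.one_mul, Matrix.mul_sub, Matrix.mul_one]
    rw [Matrix.mul_assoc, ← Matrix.mul_assoc Qᴴ, hQ, Matrix.one_mul]
    abel
  set W : Matrix (Fin n) (Fin n) ℂ := Q * D * Qᴴ + Complex.I • S with hW
  have hstarW : star W = Q * Dᴴ * Qᴴ - Complex.I • S := by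
    rw [hW]
    show (Q * D * Qᴴ + Complex.I • S)ᴴ = _
    rw [Matrix.conjTranspose_add, Matrix.conjTranspose_smul, Matrix.conjTranspose_mul,
      Matrix.conjTranspose_mul, Matrix.conjTranspose_conjTranspose, hstarS]
    simp [Complex.conj_I, Matrix.mul_assoc, sub_eq_add_neg]
  have hDDH : D * Dᴴ = 1 := by
    rw [hD, Matrix.diagonal_conjTranspose, Matrix.diagonal_mul_diagonal]
    simp only [Pi.star_apply]
    rw [show (fun k => E k * star (E k)) = fun _ => (1 : ℂ) from funext hEunit]
    simp
  have hWmem : W ∈ Matrix.unitaryGroup (Fin n) ℂ := by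
    rw [Matrix.mem_unitaryGroup_iff]
    rw [hstarW, hW]
    rw [Matrix.add_mul, Matrix.mul_sub, Matrix.mul_sub, Matrix.smul_mul,
      Matrix.mul_smul, Matrix.mul_smul, Matrix.smul_mul]
    have e1 : Q * D * Qᴴ * (Q * Dᴴ * Qᴴ) = Q * Qᴴ := by
      simp only [Matrix.mul_assoc]
      rw [← Matrix.mul_assoc Qᴴ Q, hQ, Matrix.one_mul, ← Matrix.mul_assoc D Dᴴ, hDDH,
        Matrix.one_mul]
    have e2 : Q * D * Qᴴ * S = 0 := by
      rw [Matrix.mul_assoc, hQS, Matrix.mul_zero]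
    have e3 : S * (Q * Dᴴ * Qᴴ) = 0 := by
      rw [← Matrix.mul_assoc, ← Matrix.mul_assoc, hSQ, Matrix.zero_mul, Matrix.zero_mul]
    rw [e1, e2, e3, hSS]
    simp [smul_smul, Complex.I_mul_I, hS]
  have hXS : X * S = 0 := by
    rw [hS, Matrix.mul_sub, Matrix.mul_one, hX, sub_self]
  have hXW : X * W = X * (Q * D * Qᴴ) := by
    rw [hW, Matrix.mul_add, Matrix.mul_smul, hXS, smul_zero, add_zero]
  have hXWs : X * star W = X * (Q * Dᴴ * Qᴴ) := by
    rw [hstarW, Matrix.mul_sub, Matrix.mul_smul, hXS, smul_zero, sub_zero]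
  have hstE : ∀ k, star (E k) = (t k : ℂ) - (s k : ℂ) * Complex.I := by
    intro k; simp [hE, Complex.ext_iff]
  have hDsum : D + Dᴴ = Matrix.diagonal (fun k => 2 * (t k : ℂ)) := by
    rw [hD, Matrix.diagonal_conjTranspose, Matrix.diagonal_add]
    refine congrArg Matrix.diagonal (funext fun k => ?_)
    simp only [Pi.add_apply, Pi.star_apply, hstE k, hE]
    rw [show star ((t k : ℂ) + (s k : ℂ) * Complex.I) = (t k : ℂ) - (s k : ℂ) * Complex.I from hstE k]
    ring
  have hsum : X * W + X * star W
      = X * (Q * Matrix.diagonal (fun k => 2 * (t k : ℂ)) * Qᴴ) := by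
    rw [hXW, hXWs, ← Matrix.mul_add]
    congr 1
    rw [← Matrix.add_mul, ← Matrix.mul_add, hDsum]
  have hhalf : (2⁻¹ : ℂ) • Matrix.diagonal (fun k => 2 * (t k : ℂ))
      = Matrix.diagonal (fun k => (t k : ℂ)) := by
    ext i j
    rcases eq_or_ne i j with h | h
    · subst h
      simp [Matrix.diagonal_apply_eq]
    · simp [Matrix.diagonal_apply_ne _ h]
  have htarget : X * (Q * Matrix.diagonal (fun k => (t k : ℂ)) * Qᴴ)
      = (2⁻¹ : ℂ) • (X * W + X * star W) := by
    rw [hsum, ← hhalf, Matrix.mul_smul Q, Matrix.smul_mul, Matrix.mul_smul]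
  rw [htarget, hsmul]
  have hNW : N (X * W) = N X := by
    have := hinv 1 ⟨W, hWmem⟩ X
    simpa using this
  have hNWs : N (X * star W) = N X := by
    have := hinv 1 ⟨star W, Unitary.star_mem hWmem⟩ X
    simpa using this
  calc ‖(2⁻¹ : ℂ)‖ * N (X * W + X * star W)
      ≤ ‖(2⁻¹ : ℂ)‖ * (N (X * W) + N (X * star W)) := by
        refine mul_le_mul_of_nonneg_left (htri _ _) (norm_nonneg _)
    _ = N X := by
        rw [hNW, hNWs]
        have h2 : ‖(2⁻¹ : ℂ)‖ = 2⁻¹ := by norm_num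
        rw [h2]; ring

/-- Let `A ∈ ℂ^{m×n}` have rank `r ≥ 1` and compact SVD `A = P Σ Qᴴ` (`P, Q` with
orthonormal columns, `Σ = diag(σ₁ ≥ ⋯ ≥ σ_r > 0)`), so that `U = P Qᴴ` is the partial
isometry factor of the canonical polar decomposition of `A`.  Then, in any unitarily
invariant norm `N`,
`N(AAᴴA − A) / (σ₁ (1+σ₁)) ≤ N(A − U) ≤ N(AAᴴA − A) / (σ_r (1+σ_r))`. -/
theorem stmt_4 (m n r : ℕ) (hr : 0 < r)
    (A : Matrix (Fin m) (Fin n) ℂ) (hrank : A.rank = r)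
    (P : Matrix (Fin m) (Fin r) ℂ) (Q : Matrix (Fin n) (Fin r) ℂ) (σ : Fin r → ℝ)
    (hP : Pᴴ * P = 1) (hQ : Qᴴ * Q = 1)
    (hσpos : ∀ k, 0 < σ k) (hσmono : ∀ k l : Fin r, k ≤ l → σ l ≤ σ k)
    (hSVD : A = P * Matrix.diagonal (fun k => (σ k : ℂ)) * Qᴴ)
    (U : Matrix (Fin m) (Fin n) ℂ) (hU : U = P * Qᴴ)
    (N : Matrix (Fin m) (Fin n) ℂ → ℝ)
    (htri : ∀ X Y, N (X + Y) ≤ N X + N Y)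
    (hsmul : ∀ (c : ℂ) X, N (c • X) = ‖c‖ * N X)
    (hinv : ∀ (W : Matrix.unitaryGroup (Fin m) ℂ) (V : Matrix.unitaryGroup (Fin n) ℂ)
      (X : Matrix (Fin m) (Fin n) ℂ),
      N ((W : Matrix (Fin m) (Fin m) ℂ) * X * (V : Matrix (Fin n) (Fin n) ℂ)) = N X) :
    N (A * Aᴴ * A - A) / (σ ⟨0, hr⟩ * (1 + σ ⟨0, hr⟩)) ≤ N (A - U) ∧
    N (A - U) ≤ N (A * Aᴴ * A - A) /
      (σ ⟨r - 1, Nat.sub_lt hr Nat.one_pos⟩ * (1 + σ ⟨r - 1, Nat.sub_lt hr Nat.one_pos⟩)) := by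
  -- abbreviations
  set k0 : Fin r := ⟨0, hr⟩ with hk0
  set kr : Fin r := ⟨r - 1, Nat.sub_lt hr Nat.one_pos⟩ with hkr
  set c1 : ℝ := σ k0 * (1 + σ k0) with hc1
  set cr : ℝ := σ kr * (1 + σ kr) with hcr
  have hσ1 : ∀ k, 0 < 1 + σ k := fun k => by linarith [hσpos k]
  have hc1pos : 0 < c1 := mul_pos (hσpos k0) (hσ1 k0)
  have hcrpos : 0 < cr := mul_pos (hσpos kr) (hσ1 kr)
  have hσle1 : ∀ k, σ k ≤ σ k0 := fun k => hσmono k0 k (by simp [hk0, Fin.le_def])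
  have hσler : ∀ k, σ kr ≤ σ k := fun k =>
    hσmono k kr (by simp [hkr, Fin.le_def]; omega)
  have hprod_le : ∀ k, σ k * (1 + σ k) ≤ c1 := fun k => by
    have := hσle1 k
    nlinarith [hσpos k, hσpos k0]
  have hprod_ge : ∀ k, cr ≤ σ k * (1 + σ k) := fun k => by
    have := hσler k
    nlinarith [hσpos kr, hσpos k]
  have hprodpos : ∀ k, 0 < σ k * (1 + σ k) := fun k => mul_pos (hσpos k) (hσ1 k)
  -- middle cancellation helpers
  have midQ : ∀ {p q : ℕ} (X : Matrix (Fin p) (Fin r) ℂ) (Y : Matrix (Fin r) (Fin q) ℂ),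
      X * Qᴴ * (Q * Y) = X * Y := by
    intro p q X Y
    rw [Matrix.mul_assoc, ← Matrix.mul_assoc Qᴴ, hQ, Matrix.one_mul]
  have midP : ∀ {p q : ℕ} (X : Matrix (Fin p) (Fin r) ℂ) (Y : Matrix (Fin r) (Fin q) ℂ),
      X * Pᴴ * (P * Y) = X * Y := by
    intro p q X Y
    rw [Matrix.mul_assoc, ← Matrix.mul_assoc Pᴴ, hP, Matrix.one_mul]
  have dsmul : ∀ (c : ℂ) (d : Fin r → ℂ),
      c • (P * Matrix.diagonal d * Qᴴ) = P * Matrix.diagonal (fun k => c * d k) * Qᴴ := by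
    intro c d
    have hdg : Matrix.diagonal (fun k => c * d k) = c • Matrix.diagonal d := by
      ext i j
      rcases eq_or_ne i j with h | h
      · subst h; simp [Matrix.diagonal_apply_eq]
      · simp [Matrix.diagonal_apply_ne _ h]
    rw [hdg, Matrix.mul_smul, Matrix.smul_mul]
  have sand : ∀ (d e : Fin r → ℂ),
      (P * Matrix.diagonal d * Qᴴ) * (Q * Matrix.diagonal e * Qᴴ)
        = P * Matrix.diagonal (fun k => d k * e k) * Qᴴ := by
    intro d e
    rw [Matrix.mul_assoc Q, midQ, ← Matrix.mul_assoc, Matrix.mul_assoc P,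
      Matrix.diagonal_mul_diagonal]
  have dsub : ∀ (d e : Fin r → ℂ),
      P * Matrix.diagonal d * Qᴴ - P * Matrix.diagonal e * Qᴴ
        = P * Matrix.diagonal (fun k => d k - e k) * Qᴴ := by
    intro d e
    rw [← Matrix.sub_mul, ← Matrix.mul_sub, Matrix.diagonal_sub]
  -- Aᴴ
  have hstard : (fun k => star ((σ k : ℂ))) = fun k => (σ k : ℂ) := by
    funext k; simp [Complex.star_def, Complex.conj_ofReal]
  have hAH : Aᴴ = Q * Matrix.diagonal (fun k => (σ k : ℂ)) * Pᴴ := by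
    rw [hSVD, Matrix.conjTranspose_mul, Matrix.conjTranspose_mul,
      Matrix.conjTranspose_conjTranspose, Matrix.diagonal_conjTranspose]
    rw [show (star fun k => ((σ k : ℂ))) = fun k => ((σ k : ℂ)) from hstard]
    rw [Matrix.mul_assoc]
  -- A - U and AAᴴA - A as P ⬝ diag ⬝ Qᴴ
  have hAU : A - U = P * Matrix.diagonal (fun k => (σ k : ℂ) - 1) * Qᴴ := by
    rw [hSVD, hU]
    have : P * Qᴴ = P * Matrix.diagonal (fun _ : Fin r => (1 : ℂ)) * Qᴴ := by
      rw [Matrix.diagonal_one, Matrix.mul_one]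
    rw [this, dsub]
  have hAAA : A * Aᴴ * A - A
      = P * Matrix.diagonal (fun k => (σ k : ℂ) ^ 3 - (σ k : ℂ)) * Qᴴ := by
    have h3 : A * Aᴴ * A = P * Matrix.diagonal (fun k => (σ k : ℂ) ^ 3) * Qᴴ := by
      have hd3 : (Matrix.diagonal fun k => (σ k : ℂ)) * ((Matrix.diagonal fun k => (σ k : ℂ))
            * ((Matrix.diagonal fun k => (σ k : ℂ)) * Qᴴ))
          = (Matrix.diagonal fun k => (σ k : ℂ) ^ 3) * Qᴴ := by
        rw [← Matrix.mul_assoc, Matrix.diagonal_mul_diagonal, ← Matrix.mul_assoc,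
          Matrix.diagonal_mul_diagonal]
        exact congrArg (· * Qᴴ) (congrArg _ (funext fun k => by ring))
      rw [hAH, hSVD]
      simp only [Matrix.mul_assoc]
      rw [← Matrix.mul_assoc Qᴴ Q, hQ, Matrix.one_mul, ← Matrix.mul_assoc Pᴴ P, hP,
        Matrix.one_mul, hd3]
    rw [h3, hSVD, dsub]
  have hXQ : (A - U) * (Q * Qᴴ) = A - U := by
    rw [hAU, midQ]
  have hYQ : (A * Aᴴ * A - A) * (Q * Qᴴ) = A * Aᴴ * A - A := by
    rw [hAAA, midQ]
  constructor
  · -- left inequality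
    set t1 : Fin r → ℝ := fun k => σ k * (1 + σ k) / c1 with ht1def
    have ht1 : ∀ k, |t1 k| ≤ 1 := fun k => by
      rw [abs_of_pos (div_pos (hprodpos k) hc1pos)]
      exact div_le_one_of_le₀ (hprod_le k) hc1pos.le
    have hkc := key_contract Q hQ t1 ht1 N htri hsmul hinv (A - U) hXQ
    have heq : A * Aᴴ * A - A
        = (c1 : ℂ) • ((A - U) * (Q * Matrix.diagonal (fun k => (t1 k : ℂ)) * Qᴴ)) := by
      rw [hAU, sand, dsmul, hAAA]
      have hne : (c1 : ℂ) ≠ 0 := by exact_mod_cast hc1pos.ne'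
      refine congrArg (fun d => P * Matrix.diagonal d * Qᴴ) (funext fun k => ?_)
      rw [ht1def]
      push_cast
      field_simp
      ring
    have : N (A * Aᴴ * A - A) ≤ c1 * N (A - U) := by
      rw [heq, hsmul]
      have hn : ‖(c1 : ℂ)‖ = c1 := by
        rw [Complex.norm_real, Real.norm_eq_abs, abs_of_pos hc1pos]
      calc ‖(c1 : ℂ)‖ * N ((A - U) * (Q * Matrix.diagonal (fun k => (t1 k : ℂ)) * Qᴴ))
          = c1 * N ((A - U) * (Q * Matrix.diagonal (fun k => (t1 k : ℂ)) * Qᴴ)) := by rw [hn]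
        _ ≤ c1 * N (A - U) := mul_le_mul_of_nonneg_left hkc hc1pos.le
    rw [div_le_iff₀ hc1pos]
    linarith [this]
  · -- right inequality
    set t2 : Fin r → ℝ := fun k => cr / (σ k * (1 + σ k)) with ht2def
    have ht2 : ∀ k, |t2 k| ≤ 1 := fun k => by
      rw [abs_of_pos (div_pos hcrpos (hprodpos k))]
      exact div_le_one_of_le₀ (hprod_ge k) (hprodpos k).le
    have hkc := key_contract Q hQ t2 ht2 N htri hsmul hinv (A * Aᴴ * A - A) hYQ
    have heq : (cr : ℂ) • (A - U)
        = (A * Aᴴ * A - A) * (Q * Matrix.diagonal (fun k => (t2 k : ℂ)) * Qᴴ) := by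
      rw [hAAA, sand, hAU, dsmul]
      refine congrArg (fun d => P * Matrix.diagonal d * Qᴴ) (funext fun k => ?_)
      have h0 : (σ k : ℂ) ≠ 0 := by exact_mod_cast (hσpos k).ne'
      have h1 : (1 : ℂ) + (σ k : ℂ) ≠ 0 := by
        have : (0:ℝ) < 1 + σ k := hσ1 k
        intro hcon
        have : ((1 + σ k : ℝ) : ℂ) = 0 := by push_cast; linear_combination hcon
        exact absurd (by exact_mod_cast this) (hσ1 k).ne'
      rw [ht2def]
      push_cast
      field_simp
      ring
    have hNcr : cr * N (A - U) ≤ N (A * Aᴴ * A - A) := by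
      have hn : ‖(cr : ℂ)‖ = cr := by
        rw [Complex.norm_real, Real.norm_eq_abs, abs_of_pos hcrpos]
      calc cr * N (A - U) = ‖(cr : ℂ)‖ * N (A - U) := by rw [hn]
        _ = N ((cr : ℂ) • (A - U)) := (hsmul _ _).symm
        _ = N ((A * Aᴴ * A - A) * (Q * Matrix.diagonal (fun k => (t2 k : ℂ)) * Qᴴ)) := by rw [heq]
        _ ≤ N (A * Aᴴ * A - A) := hkc
    rw [le_div_iff₀ hcrpos]
    linarith [hNcr]
end

section
/- In the spectral norm, the distance d(A) from A ∈ ℂ^{m×n} to the set of partial isometries equals max over 1 ≤ i ≤ min(m,n) of min(σᵢ(A), |1 − σᵢ(A)|). -/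
open scoped Matrix Matrix.Norms.L2Operator

open Matrix
open Matrix

private lemma aux_of_eq {m n : ℕ} (c : ℂ) (u : Fin m → ℂ) (v : Fin n → ℂ) :
    (Matrix.of fun i j => c * u i * star (v j)) = c • vecMulVec u (star v) := by
  ext i j
  simp [vecMulVec_apply]
  ring

private lemma aux_vmv_mul_vmv {m n p : ℕ} (a : Fin m → ℂ) (b b' : Fin n → ℂ) (e : Fin p → ℂ) :
    vecMulVec a b * vecMulVec b' e = (b ⬝ᵥ b') • vecMulVec a e := by
  ext i j
  simp only [Matrix.mul_apply, vecMulVec_apply, Matrix.smul_apply, dotProduct, smul_eq_mul,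
    Finset.sum_mul]
  exact Finset.sum_congr rfl fun x _ => by ring

private lemma aux_sum_vmv_mul {K m n p : ℕ} (c d : Fin K → ℂ)
    (a : Fin K → Fin m → ℂ) (b : Fin K → Fin n → ℂ) (e : Fin K → Fin p → ℂ)
    (hb : ∀ k l, star (b k) ⬝ᵥ b l = if k = l then (1:ℂ) else 0) :
    (∑ k, c k • vecMulVec (a k) (star (b k))) * (∑ k, d k • vecMulVec (b k) (e k))
      = ∑ k, (c k * d k) • vecMulVec (a k) (e k) := by
  rw [Matrix.sum_mul]
  simp_rw [Matrix.mul_sum]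
  have h : ∀ k l, (c k • vecMulVec (a k) (star (b k))) * (d l • vecMulVec (b l) (e l))
      = if k = l then (c k * d l) • vecMulVec (a k) (e l) else 0 := by
    intro k l
    rw [Matrix.smul_mul, Matrix.mul_smul, aux_vmv_mul_vmv, hb, smul_smul]
    split <;> simp [smul_smul]
  simp_rw [h, Finset.sum_ite_eq, Finset.mem_univ, if_true]

private lemma aux_vmv_ct {m n : ℕ} (c : ℂ) (a : Fin m → ℂ) (b : Fin n → ℂ) :
    (c • vecMulVec a (star b))ᴴ = (star c) • vecMulVec b (star a) := by
  ext i j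
  simp only [conjTranspose_apply, Matrix.smul_apply, vecMulVec_apply, Pi.star_apply,
    star_mul', star_star, smul_eq_mul]
  ring

private lemma aux_vmv_mulVec {m n : ℕ} (a : Fin m → ℂ) (b x : Fin n → ℂ) :
    vecMulVec a b *ᵥ x = (b ⬝ᵥ x) • a := by
  funext i
  simp only [mulVec, vecMulVec_apply, dotProduct, Pi.smul_apply, smul_eq_mul, Finset.sum_mul]
  exact Finset.sum_congr rfl fun j _ => by ring

private lemma aux_sums_mulVec {K m n : ℕ} (c : Fin K → ℂ) (u : Fin K → Fin m → ℂ)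
    (v : Fin K → Fin n → ℂ) (x : Fin n → ℂ) :
    (∑ k, c k • vecMulVec (u k) (star (v k))) *ᵥ x
      = ∑ k, (c k * (star (v k) ⬝ᵥ x)) • u k := by
  have : (∑ k, c k • vecMulVec (u k) (star (v k))) *ᵥ x
      = ∑ k, (c k • vecMulVec (u k) (star (v k))) *ᵥ x := by
    exact map_sum (AddMonoidHom.mk' (fun M : Matrix (Fin m) (Fin n) ℂ => M *ᵥ x)
      (fun A B => Matrix.add_mulVec A B x)) _ _
  rw [this]
  refine Finset.sum_congr rfl fun k _ => ?_
  rw [Matrix.smul_mulVec, aux_vmv_mulVec, smul_smul]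
open scoped Matrix.Norms.L2Operator

private lemma aux_inner_eq_dot {n : ℕ} (y z : Fin n → ℂ) :
    (inner ℂ ((WithLp.equiv 2 (Fin n → ℂ)).symm y) ((WithLp.equiv 2 (Fin n → ℂ)).symm z) : ℂ)
      = star y ⬝ᵥ z := by
  simp [PiLp.inner_apply, RCLike.inner_apply, dotProduct, mul_comm]

private lemma aux_orthonormal {K n : ℕ} (v : Fin K → Fin n → ℂ)
    (hv : ∀ k l, star (v k) ⬝ᵥ v l = if k = l then (1:ℂ) else 0) :
    Orthonormal ℂ (fun k => (WithLp.equiv 2 (Fin n → ℂ)).symm (v k)) := by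
  rw [orthonormal_iff_ite]
  intro k l
  rw [aux_inner_eq_dot, hv]

private lemma aux_norm_sum_sq {K m : ℕ} (a : Fin K → ℂ) (uE : Fin K → EuclideanSpace ℂ (Fin m))
    (hu : Orthonormal ℂ uE) :
    ‖∑ k, a k • uE k‖ ^ 2 = ∑ k, ‖a k‖ ^ 2 := by
  rw [norm_sq_eq_re_inner (𝕜 := ℂ), hu.inner_sum a a Finset.univ, map_sum]
  refine Finset.sum_congr rfl fun k _ => ?_
  rw [RCLike.conj_mul]
  norm_cast

private lemma aux_apply_eq {K m n : ℕ} (c : Fin K → ℂ) (u : Fin K → Fin m → ℂ)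
    (v : Fin K → Fin n → ℂ) (x : Fin n → ℂ) :
    (WithLp.equiv 2 (Fin m → ℂ)).symm ((∑ k, c k • vecMulVec (u k) (star (v k))) *ᵥ x)
      = ∑ k, (c k * (star (v k) ⬝ᵥ x)) • (WithLp.equiv 2 (Fin m → ℂ)).symm (u k) := by
  rw [aux_sums_mulVec, WithLp.equiv_symm_apply, WithLp.toLp_sum]
  rfl
private lemma aux_sq_le {a b : ℝ} (hb : 0 ≤ b) (h : a^2 ≤ b^2) (ha : 0 ≤ a) : a ≤ b := by
  nlinarith

private lemma aux_apply_norm_sq {K m n : ℕ} (c : Fin K → ℝ) (u : Fin K → Fin m → ℂ)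
    (v : Fin K → Fin n → ℂ)
    (hu : ∀ k l, star (u k) ⬝ᵥ u l = if k = l then (1:ℂ) else 0)
    (x : EuclideanSpace ℂ (Fin n)) :
    ‖(WithLp.equiv 2 (Fin m → ℂ)).symm
        ((∑ k, (c k : ℂ) • vecMulVec (u k) (star (v k))) *ᵥ (WithLp.equiv 2 (Fin n → ℂ) x))‖ ^ 2
      = ∑ k, (c k)^2 * ‖(inner ℂ ((WithLp.equiv 2 (Fin n → ℂ)).symm (v k)) x : ℂ)‖^2 := by
  rw [aux_apply_eq, aux_norm_sum_sq _ _ (aux_orthonormal u hu)]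
  refine Finset.sum_congr rfl fun k _ => ?_
  have : (inner ℂ ((WithLp.equiv 2 (Fin n → ℂ)).symm (v k)) x : ℂ) = star (v k) ⬝ᵥ (WithLp.equiv 2 (Fin n → ℂ) x) := by
    rw [← aux_inner_eq_dot]
    congr 1
  rw [this]
  simp [norm_mul, mul_pow, Complex.norm_real, Real.norm_eq_abs, sq_abs]

private lemma aux_opNorm_le {K m n : ℕ} (c : Fin K → ℝ) (u : Fin K → Fin m → ℂ)
    (v : Fin K → Fin n → ℂ)
    (hu : ∀ k l, star (u k) ⬝ᵥ u l = if k = l then (1:ℂ) else 0)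
    (hv : ∀ k l, star (v k) ⬝ᵥ v l = if k = l then (1:ℂ) else 0)
    {C : ℝ} (hC : 0 ≤ C) (hle : ∀ k, |c k| ≤ C) :
    ‖∑ k, (c k : ℂ) • vecMulVec (u k) (star (v k))‖ ≤ C := by
  rw [Matrix.l2_opNorm_def]
  refine ContinuousLinearMap.opNorm_le_bound _ hC fun x => ?_
  have happ : (LinearEquiv.trans Matrix.toEuclideanLin LinearMap.toContinuousLinearMap
      (∑ k, (c k : ℂ) • vecMulVec (u k) (star (v k)))) x
      = (WithLp.equiv 2 (Fin m → ℂ)).symm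
        ((∑ k, (c k : ℂ) • vecMulVec (u k) (star (v k))) *ᵥ (WithLp.equiv 2 (Fin n → ℂ) x)) := rfl
  rw [happ]
  refine aux_sq_le (by positivity) ?_ (norm_nonneg _)
  rw [aux_apply_norm_sq c u v hu x, mul_pow]
  calc ∑ k, (c k)^2 * ‖(inner ℂ ((WithLp.equiv 2 (Fin n → ℂ)).symm (v k)) x : ℂ)‖^2
      ≤ ∑ k, C^2 * ‖(inner ℂ ((WithLp.equiv 2 (Fin n → ℂ)).symm (v k)) x : ℂ)‖^2 := by
        refine Finset.sum_le_sum fun k _ => ?_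
        have : (c k)^2 ≤ C^2 := by nlinarith [hle k, abs_nonneg (c k), le_abs_self (c k), neg_abs_le (c k)]
        exact mul_le_mul_of_nonneg_right this (by positivity)
    _ = C^2 * ∑ k, ‖(inner ℂ ((WithLp.equiv 2 (Fin n → ℂ)).symm (v k)) x : ℂ)‖^2 := by
        rw [Finset.mul_sum]
    _ ≤ C^2 * ‖x‖^2 := by
        refine mul_le_mul_of_nonneg_left ?_ (by positivity)
        exact (aux_orthonormal v hv).sum_inner_products_le x

private lemma aux_opNorm_ge {K m n : ℕ} (c : Fin K → ℝ) (u : Fin K → Fin m → ℂ)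
    (v : Fin K → Fin n → ℂ)
    (hu : ∀ k l, star (u k) ⬝ᵥ u l = if k = l then (1:ℂ) else 0)
    (hv : ∀ k l, star (v k) ⬝ᵥ v l = if k = l then (1:ℂ) else 0)
    (k : Fin K) :
    |c k| ≤ ‖∑ k, (c k : ℂ) • vecMulVec (u k) (star (v k))‖ := by
  have h := Matrix.l2_opNorm_mulVec (∑ k, (c k : ℂ) • vecMulVec (u k) (star (v k)))
    ((WithLp.equiv 2 (Fin n → ℂ)).symm (v k))
  have hnv : ‖(WithLp.equiv 2 (Fin n → ℂ)).symm (v k)‖ = 1 := (aux_orthonormal v hv).1 k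
  rw [hnv, mul_one] at h
  have hBv : (∑ l, (c l : ℂ) • vecMulVec (u l) (star (v l))) *ᵥ (v k) = (c k : ℂ) • u k := by
    rw [aux_sums_mulVec]
    have : ∀ l, ((c l : ℂ) * (star (v l) ⬝ᵥ v k)) • u l
        = if l = k then (c k : ℂ) • u k else 0 := by
      intro l
      rw [hv]
      split
      · next heq => subst heq; simp
      · simp
    simp_rw [this, Finset.sum_ite_eq', Finset.mem_univ, if_true]
  have hnorm : ‖(EuclideanSpace.equiv (Fin m) ℂ).symm
      ((∑ l, (c l : ℂ) • vecMulVec (u l) (star (v l))) *ᵥ ((WithLp.equiv 2 (Fin n → ℂ)).symm (v k)))‖ = |c k| := by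
    have : ((∑ l, (c l : ℂ) • vecMulVec (u l) (star (v l))) *ᵥ ((WithLp.equiv 2 (Fin n → ℂ)).symm (v k) : EuclideanSpace ℂ (Fin n)))
        = (c k : ℂ) • u k := hBv
    rw [show ((EuclideanSpace.equiv (Fin m) ℂ).symm
        ((∑ l, (c l : ℂ) • vecMulVec (u l) (star (v l))) *ᵥ ((WithLp.equiv 2 (Fin n → ℂ)).symm (v k) : EuclideanSpace ℂ (Fin n))) : EuclideanSpace ℂ (Fin m))
        = (c k : ℂ) • (WithLp.equiv 2 (Fin m → ℂ)).symm (u k) from congrArg _ hBv]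
    rw [norm_smul, (aux_orthonormal u hu).1 k, mul_one, Complex.norm_real, Real.norm_eq_abs]
  rw [hnorm] at h
  exact h
private lemma aux_sq_eq {a b : ℝ} (ha : 0 ≤ a) (hb : 0 ≤ b) (h : a^2 = b^2) : a = b := by
  nlinarith

private lemma aux_inner_eq_dot' {n : ℕ} (p q : EuclideanSpace ℂ (Fin n)) :
    (inner ℂ p q : ℂ) = star (WithLp.equiv 2 (Fin n → ℂ) p) ⬝ᵥ (WithLp.equiv 2 (Fin n → ℂ) q) :=
  aux_inner_eq_dot _ _

private lemma aux_norm_sq_dot {n : ℕ} (p : EuclideanSpace ℂ (Fin n)) :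
    ‖p‖^2 = RCLike.re ((star (WithLp.equiv 2 (Fin n → ℂ) p) ⬝ᵥ (WithLp.equiv 2 (Fin n → ℂ) p) : ℂ)) := by
  rw [norm_sq_eq_re_inner (𝕜 := ℂ), aux_inner_eq_dot']

section proj

variable {m n : ℕ} (U : Matrix (Fin m) (Fin n) ℂ)

private lemma aux_QQ (hU : U * Uᴴ * U = U) : (Uᴴ * U) * (Uᴴ * U) = Uᴴ * U := by
  calc (Uᴴ * U) * (Uᴴ * U) = Uᴴ * (U * Uᴴ * U) := by simp only [Matrix.mul_assoc]
    _ = Uᴴ * U := by rw [hU]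

private lemma aux_QH : (Uᴴ * U)ᴴ = Uᴴ * U := by
  rw [Matrix.conjTranspose_mul, Matrix.conjTranspose_conjTranspose]

private lemma aux_gx (x : EuclideanSpace ℂ (Fin n)) :
    (WithLp.equiv 2 (Fin n → ℂ)) (Matrix.toEuclideanLin (Uᴴ * U) x)
      = (Uᴴ * U) *ᵥ (WithLp.equiv 2 (Fin n → ℂ) x) := by
  rw [Matrix.toEuclideanLin_apply]
  exact Equiv.apply_symm_apply _ _

private lemma aux_gg (hU : U * Uᴴ * U = U) (x : EuclideanSpace ℂ (Fin n)) :
    Matrix.toEuclideanLin (Uᴴ * U) (Matrix.toEuclideanLin (Uᴴ * U) x)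
      = Matrix.toEuclideanLin (Uᴴ * U) x := by
  have h2 := aux_gx (U := U) (Matrix.toEuclideanLin (Uᴴ * U) x)
  rw [Matrix.toEuclideanLin_apply, Matrix.toEuclideanLin_apply, WithLp.ofLp_toLp,
    Matrix.mulVec_mulVec, aux_QQ U hU]

private lemma aux_gsym (x y : EuclideanSpace ℂ (Fin n)) :
    (inner ℂ (Matrix.toEuclideanLin (Uᴴ * U) x) y : ℂ) = inner ℂ x (Matrix.toEuclideanLin (Uᴴ * U) y) := by
  rw [aux_inner_eq_dot', aux_inner_eq_dot', aux_gx, aux_gx, Matrix.star_mulVec, aux_QH,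
    ← Matrix.dotProduct_mulVec]

private lemma aux_Ux_eq_gx (hU : U * Uᴴ * U = U) (x : EuclideanSpace ℂ (Fin n)) :
    ‖(WithLp.equiv 2 (Fin m → ℂ)).symm (U *ᵥ (WithLp.equiv 2 (Fin n → ℂ) x))‖
      = ‖Matrix.toEuclideanLin (Uᴴ * U) x‖ := by
  refine aux_sq_eq (norm_nonneg _) (norm_nonneg _) ?_
  rw [aux_norm_sq_dot, aux_norm_sq_dot]
  congr 1
  rw [Equiv.apply_symm_apply, aux_gx]
  rw [Matrix.star_mulVec, Matrix.star_mulVec, Matrix.dotProduct_mulVec,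
    Matrix.dotProduct_mulVec, Matrix.vecMul_vecMul, Matrix.vecMul_vecMul, aux_QH,
    aux_QQ U hU]

private lemma aux_gx_le (hU : U * Uᴴ * U = U) (x : EuclideanSpace ℂ (Fin n)) :
    ‖Matrix.toEuclideanLin (Uᴴ * U) x‖ ≤ ‖x‖ := by
  set g := Matrix.toEuclideanLin (Uᴴ * U)
  have horth : (inner ℂ (g x) (x - g x) : ℂ) = 0 := by
    rw [aux_gsym U, map_sub, aux_gg U hU, sub_self]
    exact inner_zero_right _
  have hx : x = g x + (x - g x) := by abel
  have := @norm_add_sq ℂ _ _ _ _ (g x) (x - g x)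
  rw [horth] at this
  simp only [map_zero, mul_zero, add_zero, zero_add] at this
  refine aux_sq_le (norm_nonneg _) ?_ (norm_nonneg _)
  calc ‖g x‖^2 ≤ ‖g x‖^2 + ‖x - g x‖^2 := le_add_of_nonneg_right (by positivity)
    _ = ‖g x + (x - g x)‖^2 := this.symm
    _ = ‖x‖^2 := by rw [← hx]

end proj
private lemma aux_span_dim {K n : ℕ} (v : Fin K → Fin n → ℂ)
    (hv : ∀ k l, star (v k) ⬝ᵥ v l = if k = l then (1:ℂ) else 0)
    (p : ℕ) (hp : p ≤ K) :
    Module.finrank ℂ ↥(Submodule.span ℂ (Set.range fun j : Fin p =>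
      (WithLp.equiv 2 (Fin n → ℂ)).symm (v (Fin.castLE hp j)))) = p := by
  have ho : Orthonormal ℂ (fun j : Fin p => (WithLp.equiv 2 (Fin n → ℂ)).symm (v (Fin.castLE hp j))) :=
    (aux_orthonormal v hv).comp _ (Fin.castLE_injective hp)
  rw [finrank_span_eq_card ho.linearIndependent, Fintype.card_fin]

private lemma aux_inter_ne_bot {n : ℕ} (S W : Submodule ℂ (EuclideanSpace ℂ (Fin n)))
    (h : n < Module.finrank ℂ ↥S + Module.finrank ℂ ↥W) :
    ∃ x, x ∈ S ∧ x ∈ W ∧ x ≠ 0 := by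
  have hsup : Module.finrank ℂ ↥(S ⊔ W) ≤ n := by
    have h2 := Submodule.finrank_le (S ⊔ W)
    rwa [finrank_euclideanSpace_fin] at h2
  have heq := Submodule.finrank_sup_add_finrank_inf_eq S W
  have hpos : 0 < Module.finrank ℂ ↥(S ⊓ W) := by omega
  have hne : S ⊓ W ≠ ⊥ := by
    intro hbot
    rw [hbot, finrank_bot] at hpos
    omega
  obtain ⟨x, hx, hx0⟩ := (Submodule.ne_bot_iff _).mp hne
  exact ⟨x, hx.1, hx.2, hx0⟩

set_option maxHeartbeats 1000000 in
private lemma aux_lb {K m n : ℕ} (hKn : K ≤ n)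
    (σ : Fin K → ℝ) (u : Fin K → Fin m → ℂ) (v : Fin K → Fin n → ℂ)
    (hσnonneg : ∀ k, 0 ≤ σ k) (hσmono : ∀ k l, k ≤ l → σ l ≤ σ k)
    (hu : ∀ k l, star (u k) ⬝ᵥ u l = if k = l then (1:ℂ) else 0)
    (hv : ∀ k l, star (v k) ⬝ᵥ v l = if k = l then (1:ℂ) else 0)
    (U : Matrix (Fin m) (Fin n) ℂ) (hU : U * Uᴴ * U = U) (k : Fin K) :
    min (σ k) |1 - σ k| ≤ ‖(∑ l, (σ l : ℂ) • Matrix.vecMulVec (u l) (star (v l))) - U‖ := by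
  classical
  set A := ∑ l, (σ l : ℂ) • Matrix.vecMulVec (u l) (star (v l)) with hAdef
  set t := ‖A - U‖ with htdef
  have ht0 : 0 ≤ t := norm_nonneg _
  set g := Matrix.toEuclideanLin (Uᴴ * U) with hgdef
  have hvE := aux_orthonormal v hv
  have hBx : ∀ x : EuclideanSpace ℂ (Fin n),
      ‖(WithLp.equiv 2 (Fin m → ℂ)).symm (A *ᵥ (WithLp.equiv 2 (Fin n → ℂ) x))
        - (WithLp.equiv 2 (Fin m → ℂ)).symm (U *ᵥ (WithLp.equiv 2 (Fin n → ℂ) x))‖ ≤ t * ‖x‖ := by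
    intro x
    have h := Matrix.l2_opNorm_mulVec (A - U) x
    have heq : ((EuclideanSpace.equiv (Fin m) ℂ).symm ((A - U) *ᵥ x) : EuclideanSpace ℂ (Fin m))
        = (WithLp.equiv 2 (Fin m → ℂ)).symm (A *ᵥ (WithLp.equiv 2 (Fin n → ℂ) x))
          - (WithLp.equiv 2 (Fin m → ℂ)).symm (U *ᵥ (WithLp.equiv 2 (Fin n → ℂ) x)) := by
      show (WithLp.equiv 2 (Fin m → ℂ)).symm ((A - U) *ᵥ (WithLp.equiv 2 (Fin n → ℂ) x)) = _
      rw [Matrix.sub_mulVec, WithLp.equiv_symm_apply, WithLp.toLp_sub]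
    rw [heq] at h
    exact h
  rcases le_or_gt 1 (σ k) with h1 | h1
  · -- σ k ≥ 1 : test vector v k
    set x : EuclideanSpace ℂ (Fin n) := (WithLp.equiv 2 (Fin n → ℂ)).symm (v k) with hxdef
    have hxnorm : ‖x‖ = 1 := hvE.1 k
    have hAxnorm : ‖(WithLp.equiv 2 (Fin m → ℂ)).symm (A *ᵥ (WithLp.equiv 2 (Fin n → ℂ) x))‖ = σ k := by
      refine aux_sq_eq (norm_nonneg _) (hσnonneg k) ?_
      rw [hAdef, aux_apply_norm_sq σ u v hu x]
      have hterm : ∀ l, (σ l)^2 * ‖(inner ℂ ((WithLp.equiv 2 (Fin n → ℂ)).symm (v l)) x : ℂ)‖^2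
          = if l = k then (σ k)^2 else 0 := by
        intro l
        rw [hxdef, aux_inner_eq_dot, hv]
        split
        · next h => subst h; simp
        · simp
      rw [Finset.sum_congr rfl fun l _ => hterm l]
      simp
    have hUxnorm : ‖(WithLp.equiv 2 (Fin m → ℂ)).symm (U *ᵥ (WithLp.equiv 2 (Fin n → ℂ) x))‖ ≤ 1 := by
      rw [aux_Ux_eq_gx U hU x]
      calc ‖Matrix.toEuclideanLin (Uᴴ * U) x‖ ≤ ‖x‖ := aux_gx_le U hU x
        _ = 1 := hxnorm
    have hb := hBx x
    rw [hxnorm, mul_one] at hb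
    have h2 := norm_sub_norm_le ((WithLp.equiv 2 (Fin m → ℂ)).symm (A *ᵥ (WithLp.equiv 2 (Fin n → ℂ) x)))
      ((WithLp.equiv 2 (Fin m → ℂ)).symm (U *ᵥ (WithLp.equiv 2 (Fin n → ℂ) x)))
    have habs : |1 - σ k| = σ k - 1 := by
      rw [abs_of_nonpos (by linarith)]; ring
    calc min (σ k) |1 - σ k| ≤ |1 - σ k| := min_le_right _ _
      _ ≤ t := by rw [habs]; linarith
  · -- σ k < 1
    rcases le_or_gt (Module.finrank ℂ ↥(LinearMap.range g)) (k : ℕ) with hr | hr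
    · -- low rank: intersect span(v_0..v_k) with ker g
      have hk1 : (k:ℕ) + 1 ≤ K := k.isLt
      have hdims := LinearMap.finrank_range_add_finrank_ker g
      rw [finrank_euclideanSpace_fin] at hdims
      have hS := aux_span_dim v hv ((k:ℕ)+1) hk1
      have hlt : n < Module.finrank ℂ ↥(Submodule.span ℂ (Set.range fun j : Fin ((k:ℕ)+1) =>
          (WithLp.equiv 2 (Fin n → ℂ)).symm (v (Fin.castLE hk1 j))))
          + Module.finrank ℂ ↥(LinearMap.ker g) := by
        rw [hS]; omega
      obtain ⟨x, hxS, hxk, hx0⟩ := aux_inter_ne_bot _ _ hlt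
      rw [Submodule.mem_span_range_iff_exists_fun] at hxS
      obtain ⟨cc, hcc⟩ := hxS
      set a : Fin K → ℂ := fun l => if h : (l:ℕ) < (k:ℕ)+1 then cc ⟨(l:ℕ), h⟩ else 0 with hadef
      have hxa : ∑ l, a l • ((WithLp.equiv 2 (Fin n → ℂ)).symm (v l)) = x := by
        rw [← hcc]
        have hmem : ∀ l : Fin K, l ∈ Finset.univ.map (Fin.castLEEmb hk1) ↔ (l:ℕ) < (k:ℕ)+1 := by
          intro l
          simp only [Finset.mem_map, Finset.mem_univ, true_and, Fin.castLEEmb_apply]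
          constructor
          · rintro ⟨j, rfl⟩; exact j.isLt
          · intro h; exact ⟨⟨(l:ℕ), h⟩, Fin.ext rfl⟩
        rw [← Finset.sum_subset (Finset.subset_univ (Finset.univ.map (Fin.castLEEmb hk1)))
          (fun l _ hl => by
            have hnl : ¬ ((l:ℕ) < (k:ℕ)+1) := fun hc => hl ((hmem l).mpr hc)
            simp only [hadef, dif_neg hnl, zero_smul])]
        rw [Finset.sum_map]
        refine Finset.sum_congr rfl fun j _ => ?_
        have ha : a (Fin.castLEEmb hk1 j) = cc j := by
          simp only [hadef, Fin.castLEEmb_apply]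
          rw [dif_pos (by simpa using j.isLt)]
          exact congrArg cc (Fin.ext rfl)
        rw [ha]
        rfl
      have hip : ∀ l, (inner ℂ ((WithLp.equiv 2 (Fin n → ℂ)).symm (v l)) x : ℂ) = a l := by
        intro l
        rw [← hxa]
        exact hvE.inner_right_fintype a l
      have hxnorm : ‖x‖^2 = ∑ l, ‖a l‖^2 := by
        rw [← hxa, aux_norm_sum_sq _ _ hvE]
      have hAxsq : ‖(WithLp.equiv 2 (Fin m → ℂ)).symm (A *ᵥ (WithLp.equiv 2 (Fin n → ℂ) x))‖^2
          = ∑ l, (σ l)^2 * ‖a l‖^2 := by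
        rw [hAdef, aux_apply_norm_sq σ u v hu x]
        exact Finset.sum_congr rfl fun l _ => by rw [hip l]
      have hAxge : σ k * ‖x‖ ≤ ‖(WithLp.equiv 2 (Fin m → ℂ)).symm (A *ᵥ (WithLp.equiv 2 (Fin n → ℂ) x))‖ := by
        refine aux_sq_le (norm_nonneg _) ?_ (mul_nonneg (hσnonneg k) (norm_nonneg _))
        rw [hAxsq, mul_pow, hxnorm, Finset.mul_sum]
        refine Finset.sum_le_sum fun l _ => ?_
        by_cases hal : a l = 0
        · simp [hal]
        · have hlk : (l:ℕ) ≤ (k:ℕ) := by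
            by_contra hc
            apply hal
            have hnl : ¬ ((l:ℕ) < (k:ℕ)+1) := by omega
            simp only [hadef, dif_neg hnl]
          have hσ : σ k ≤ σ l := hσmono l k hlk
          have hsq : σ k^2 ≤ σ l^2 := by nlinarith [hσnonneg l, hσnonneg k]
          exact mul_le_mul_of_nonneg_right hsq (sq_nonneg _)
      have hUx0 : ‖(WithLp.equiv 2 (Fin m → ℂ)).symm (U *ᵥ (WithLp.equiv 2 (Fin n → ℂ) x))‖ = 0 := by
        rw [aux_Ux_eq_gx U hU x]
        have h0 : Matrix.toEuclideanLin (Uᴴ * U) x = 0 := LinearMap.mem_ker.mp hxk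
        rw [h0, norm_zero]
      have hxpos : 0 < ‖x‖ := norm_pos_iff.mpr hx0
      have hb := hBx x
      have h2 := norm_sub_norm_le ((WithLp.equiv 2 (Fin m → ℂ)).symm (A *ᵥ (WithLp.equiv 2 (Fin n → ℂ) x)))
        ((WithLp.equiv 2 (Fin m → ℂ)).symm (U *ᵥ (WithLp.equiv 2 (Fin n → ℂ) x)))
      have hσt : σ k ≤ t := by
        have hineq : σ k * ‖x‖ ≤ t * ‖x‖ := by linarith
        exact le_of_mul_le_mul_right (by linarith) hxpos
      exact (min_le_left _ _).trans hσt
    · -- high rank: intersect range g with orthogonal complement of span(v_0..v_{k-1})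
      have hk0 : (k:ℕ) ≤ K := le_of_lt k.isLt
      have hS := aux_span_dim v hv (k:ℕ) hk0
      have hTdim := Submodule.finrank_add_finrank_orthogonal
        (Submodule.span ℂ (Set.range fun j : Fin (k:ℕ) =>
          (WithLp.equiv 2 (Fin n → ℂ)).symm (v (Fin.castLE hk0 j))))
      rw [finrank_euclideanSpace_fin, hS] at hTdim
      have hdims := LinearMap.finrank_range_add_finrank_ker g
      rw [finrank_euclideanSpace_fin] at hdims
      have hlt : n < Module.finrank ℂ ↥(LinearMap.range g)
          + Module.finrank ℂ ↥((Submodule.span ℂ (Set.range fun j : Fin (k:ℕ) =>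
            (WithLp.equiv 2 (Fin n → ℂ)).symm (v (Fin.castLE hk0 j))))ᗮ) := by
        omega
      obtain ⟨x, hxR, hxT, hx0⟩ := aux_inter_ne_bot _ _ hlt
      have hfix : g x = x := by
        obtain ⟨y, hy⟩ := hxR
        rw [← hy, hgdef]
        exact aux_gg U hU y
      have hUxnorm : ‖(WithLp.equiv 2 (Fin m → ℂ)).symm (U *ᵥ (WithLp.equiv 2 (Fin n → ℂ) x))‖ = ‖x‖ := by
        rw [aux_Ux_eq_gx U hU x, ← hgdef, hfix]
      have hAxle : ‖(WithLp.equiv 2 (Fin m → ℂ)).symm (A *ᵥ (WithLp.equiv 2 (Fin n → ℂ) x))‖ ≤ σ k * ‖x‖ := by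
        refine aux_sq_le (mul_nonneg (hσnonneg k) (norm_nonneg _)) ?_ (norm_nonneg _)
        rw [hAdef, aux_apply_norm_sq σ u v hu x, mul_pow]
        calc ∑ l, (σ l)^2 * ‖(inner ℂ ((WithLp.equiv 2 (Fin n → ℂ)).symm (v l)) x : ℂ)‖^2
            ≤ ∑ l, (σ k)^2 * ‖(inner ℂ ((WithLp.equiv 2 (Fin n → ℂ)).symm (v l)) x : ℂ)‖^2 := by
              refine Finset.sum_le_sum fun l _ => ?_
              rcases lt_or_ge (l:ℕ) (k:ℕ) with hlk | hlk
              · have hmem : ((WithLp.equiv 2 (Fin n → ℂ)).symm (v l) : EuclideanSpace ℂ (Fin n))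
                    ∈ Submodule.span ℂ (Set.range fun j : Fin (k:ℕ) =>
                      (WithLp.equiv 2 (Fin n → ℂ)).symm (v (Fin.castLE hk0 j))) := by
                  apply Submodule.subset_span
                  exact ⟨⟨(l:ℕ), hlk⟩, congrArg (fun w => (WithLp.equiv 2 (Fin n → ℂ)).symm (v w)) (Fin.ext rfl)⟩
                have hzero := (Submodule.mem_orthogonal _ x).mp hxT _ hmem
                rw [hzero]
                simp
              · have hσ : σ l ≤ σ k := hσmono k l hlk
                have hsq : σ l^2 ≤ σ k^2 := by nlinarith [hσnonneg l, hσnonneg k]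
                exact mul_le_mul_of_nonneg_right hsq (sq_nonneg _)
          _ = (σ k)^2 * ∑ l, ‖(inner ℂ ((WithLp.equiv 2 (Fin n → ℂ)).symm (v l)) x : ℂ)‖^2 := by
              rw [Finset.mul_sum]
          _ ≤ (σ k)^2 * ‖x‖^2 := by
              refine mul_le_mul_of_nonneg_left ?_ (by positivity)
              exact hvE.sum_inner_products_le x
      have hxpos : 0 < ‖x‖ := norm_pos_iff.mpr hx0
      have hb := hBx x
      have h2 := norm_sub_norm_le ((WithLp.equiv 2 (Fin m → ℂ)).symm (U *ᵥ (WithLp.equiv 2 (Fin n → ℂ) x)))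
        ((WithLp.equiv 2 (Fin m → ℂ)).symm (A *ᵥ (WithLp.equiv 2 (Fin n → ℂ) x)))
      rw [norm_sub_rev] at h2
      have hσt : 1 - σ k ≤ t := by
        have hineq : (1 - σ k) * ‖x‖ ≤ t * ‖x‖ := by nlinarith
        exact le_of_mul_le_mul_right hineq hxpos
      have habs : |1 - σ k| = 1 - σ k := abs_of_nonneg (by linarith)
      calc min (σ k) |1 - σ k| ≤ |1 - σ k| := min_le_right _ _
        _ ≤ t := by rw [habs]; exact hσt
set_option maxHeartbeats 1000000 in
/-- In the spectral norm, the distance from `A ∈ ℂ^{m×n}` (with singular values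
`σ₁ ≥ σ₂ ≥ ⋯`) to the set of partial isometries equals
`max_i min(σᵢ, |1 − σᵢ|)`, and this distance is attained. -/
theorem stmt_7 (m n : ℕ) (hmn : 0 < min m n)
    (A : Matrix (Fin m) (Fin n) ℂ)
    (σ : Fin (min m n) → ℝ) (u : Fin (min m n) → Fin m → ℂ) (v : Fin (min m n) → Fin n → ℂ)
    (hσnonneg : ∀ k, 0 ≤ σ k) (hσmono : ∀ k l, k ≤ l → σ l ≤ σ k)
    (hu : ∀ k l, star (u k) ⬝ᵥ u l = if k = l then (1 : ℂ) else 0)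
    (hv : ∀ k l, star (v k) ⬝ᵥ v l = if k = l then (1 : ℂ) else 0)
    (hA : A = ∑ k, Matrix.of fun i j => (σ k : ℂ) * u k i * star (v k j)) :
    IsLeast {x : ℝ | ∃ U : Matrix (Fin m) (Fin n) ℂ, U * Uᴴ * U = U ∧ ‖A - U‖ = x}
      (Finset.univ.sup' ⟨⟨0, hmn⟩, Finset.mem_univ _⟩
        fun i => min (σ i) |1 - σ i|) := by
  classical
  have hKn : min m n ≤ n := min_le_right m n
  have hAeq : A = ∑ k, (σ k : ℂ) • Matrix.vecMulVec (u k) (star (v k)) := by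
    rw [hA]
    exact Finset.sum_congr rfl fun k _ => aux_of_eq _ _ _
  set ε : Fin (min m n) → ℝ := fun k => if |1 - σ k| ≤ σ k then 1 else 0 with hεdef
  set U₀ : Matrix (Fin m) (Fin n) ℂ := ∑ k, (ε k : ℂ) • Matrix.vecMulVec (u k) (star (v k))
    with hU₀def
  set c : Fin (min m n) → ℝ := fun k => σ k - ε k with hcdef
  have habs : ∀ k, |c k| = min (σ k) |1 - σ k| := by
    intro k
    by_cases h : |1 - σ k| ≤ σ k
    · simp only [hcdef, hεdef, if_pos h]
      rw [min_eq_right h, abs_sub_comm]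
    · simp only [hcdef, hεdef, if_neg h]
      rw [min_eq_left (le_of_lt (lt_of_not_ge h)), sub_zero, abs_of_nonneg (hσnonneg k)]
  have hAU : A - U₀ = ∑ k, (c k : ℂ) • Matrix.vecMulVec (u k) (star (v k)) := by
    rw [hAeq, hU₀def, ← Finset.sum_sub_distrib]
    refine Finset.sum_congr rfl fun k _ => ?_
    rw [hcdef]
    push_cast
    rw [sub_smul]
  have hpartial : U₀ * U₀ᴴ * U₀ = U₀ := by
    have hU₀H : U₀ᴴ = ∑ k, star ((ε k : ℂ)) • Matrix.vecMulVec (v k) (star (u k)) := by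
      rw [hU₀def, Matrix.conjTranspose_sum]
      exact Finset.sum_congr rfl fun k _ => aux_vmv_ct _ _ _
    rw [hU₀H, hU₀def]
    rw [aux_sum_vmv_mul (fun k => (ε k : ℂ)) (fun k => star ((ε k : ℂ))) u v
      (fun k => star (u k)) hv]
    rw [aux_sum_vmv_mul (fun k => (ε k : ℂ) * star ((ε k : ℂ))) (fun k => (ε k : ℂ)) u u
      (fun k => star (v k)) hu]
    refine Finset.sum_congr rfl fun k _ => ?_
    congr 1
    by_cases h : |1 - σ k| ≤ σ k <;> simp [hεdef, h]
  have hmin_nonneg : ∀ i, 0 ≤ min (σ i) |1 - σ i| := fun i => le_min (hσnonneg i) (abs_nonneg _)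
  have hM0 : 0 ≤ Finset.univ.sup' ⟨⟨0, hmn⟩, Finset.mem_univ _⟩ fun i => min (σ i) |1 - σ i| :=
    le_trans (hmin_nonneg ⟨0, hmn⟩) (Finset.le_sup' (fun i => min (σ i) |1 - σ i|) (Finset.mem_univ ⟨0, hmn⟩))
  have hub : ∀ k, |c k| ≤ Finset.univ.sup' ⟨⟨0, hmn⟩, Finset.mem_univ _⟩
      fun i => min (σ i) |1 - σ i| := by
    intro k
    rw [habs k]
    exact Finset.le_sup' (fun i => min (σ i) |1 - σ i|) (Finset.mem_univ k)
  have hle : ‖A - U₀‖ ≤ Finset.univ.sup' ⟨⟨0, hmn⟩, Finset.mem_univ _⟩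
      fun i => min (σ i) |1 - σ i| := by
    rw [hAU]
    exact aux_opNorm_le c u v hu hv hM0 hub
  have hge : (Finset.univ.sup' ⟨⟨0, hmn⟩, Finset.mem_univ _⟩
      fun i => min (σ i) |1 - σ i|) ≤ ‖A - U₀‖ := by
    refine Finset.sup'_le _ _ fun k _ => ?_
    rw [← habs k, hAU]
    exact aux_opNorm_ge c u v hu hv k
  constructor
  · exact ⟨U₀, hpartial, le_antisymm hle hge⟩
  · rintro x ⟨W, hW, rfl⟩
    refine Finset.sup'_le _ _ fun k _ => ?_
    rw [hAeq]
    exact aux_lb hKn σ u v hσnonneg hσmono hu hv W hW k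
end

section
/- Let A = [A₁; A₂] be a partial isometry of rank r with CS decomposition Aᵢ = Uᵢ D_i V₁* (D₁ = C, D₂ = S diagonal with C² + S² = diag(I_r, 0_{n−r})), let H₁ = V₁ C V₁*, H₂ = V₁ S V₁*, and let μ > 1. Then the Hermitian matrix B = H₂ − H₁ + μ(I − A*A) satisfies B = V₁ diag(S_r − C_r, μ I_{n−r}) V₁*, and its spectrum is contained in [−1, 1] ∪ {μ}. -/
open scoped Matrix

/-- Let `A = [A₁; A₂]` be a partial isometry of rank `r` with CS decomposition
`A₁ = U₁ C V₁ᴴ`, `A₂ = U₂ S V₁ᴴ`, where `C = diag(cos θᵢ)` and `S = diag(sin θᵢ)` on the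
leading `r` entries and zero afterwards. With `H₁ = V₁ C V₁ᴴ`, `H₂ = V₁ S V₁ᴴ`, and
`μ > 1`, the matrix `B = H₂ − H₁ + μ(I − AᴴA)` satisfies
`B = V₁ diag(S_r − C_r, μ I_{n−r}) V₁ᴴ` and has spectrum contained in `[−1,1] ∪ {μ}`. -/
theorem stmt_13 (m₁ m₂ n r : ℕ)
    (A₁ : Matrix (Fin m₁) (Fin n) ℂ) (A₂ : Matrix (Fin m₂) (Fin n) ℂ)
    (hpi : (Matrix.fromRows A₁ A₂) * (Matrix.fromRows A₁ A₂)ᴴ * (Matrix.fromRows A₁ A₂)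
      = Matrix.fromRows A₁ A₂)
    (hrank : (Matrix.fromRows A₁ A₂).rank = r)
    (U₁ : Matrix (Fin m₁) (Fin n) ℂ) (U₂ : Matrix (Fin m₂) (Fin n) ℂ)
    (V₁ : Matrix (Fin n) (Fin n) ℂ) (θ : Fin n → ℝ)
    (hU₁ : U₁ᴴ * U₁ = 1) (hU₂ : U₂ᴴ * U₂ = 1) (hV₁ : V₁ ∈ Matrix.unitaryGroup (Fin n) ℂ)
    (hθ : ∀ i, θ i ∈ Set.Icc 0 (Real.pi / 2))
    (C S : Matrix (Fin n) (Fin n) ℂ)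
    (hC : C = Matrix.diagonal (fun i : Fin n =>
      if (i : ℕ) < r then (Real.cos (θ i) : ℂ) else 0))
    (hS : S = Matrix.diagonal (fun i : Fin n =>
      if (i : ℕ) < r then (Real.sin (θ i) : ℂ) else 0))
    (hA₁ : A₁ = U₁ * C * V₁ᴴ) (hA₂ : A₂ = U₂ * S * V₁ᴴ)
    (H₁ H₂ B : Matrix (Fin n) (Fin n) ℂ)
    (hH₁ : H₁ = V₁ * C * V₁ᴴ) (hH₂ : H₂ = V₁ * S * V₁ᴴ)
    (μ : ℝ) (hμ : 1 < μ)
    (hB : B = H₂ - H₁ + (μ : ℂ) •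
      (1 - (Matrix.fromRows A₁ A₂)ᴴ * (Matrix.fromRows A₁ A₂))) :
    B.IsHermitian ∧
    B = V₁ * Matrix.diagonal (fun i : Fin n =>
      if (i : ℕ) < r then ((Real.sin (θ i) - Real.cos (θ i) : ℝ) : ℂ) else (μ : ℂ)) * V₁ᴴ ∧
    spectrum ℂ B ⊆ (fun x : ℝ => (x : ℂ)) '' Set.Icc (-1 : ℝ) 1 ∪ {(μ : ℂ)} := by
  set d : Fin n → ℂ := fun i : Fin n =>
    if (i : ℕ) < r then ((Real.sin (θ i) - Real.cos (θ i) : ℝ) : ℂ) else (μ : ℂ) with hd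
  have hVsu : V₁ᴴ * V₁ = 1 := hV₁.1
  have hVus : V₁ * V₁ᴴ = 1 := hV₁.2
  -- AᴴA = V₁ (C² + S²) V₁ᴴ
  have hAA : (Matrix.fromRows A₁ A₂)ᴴ * (Matrix.fromRows A₁ A₂)
      = V₁ * Matrix.diagonal (fun i : Fin n => if (i : ℕ) < r then (1 : ℂ) else 0) * V₁ᴴ := by
    rw [Matrix.conjTranspose_fromRows_eq_fromCols_conjTranspose, Matrix.fromCols_mul_fromRows, hA₁, hA₂]
    have hCh : Cᴴ = C := by
      rw [hC, Matrix.diagonal_conjTranspose]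
      ext i j
      rcases eq_or_ne i j with rfl | hij
      · by_cases h : (i : ℕ) < r <;>
          simp [h, Pi.star_apply, Complex.conj_ofReal, ← Complex.ofReal_cos]
      · simp [Matrix.diagonal_apply_ne _ hij]
    have hSh : Sᴴ = S := by
      rw [hS, Matrix.diagonal_conjTranspose]
      ext i j
      rcases eq_or_ne i j with rfl | hij
      · by_cases h : (i : ℕ) < r <;>
          simp [h, Pi.star_apply, Complex.conj_ofReal, ← Complex.ofReal_sin]
      · simp [Matrix.diagonal_apply_ne _ hij]
    have e1 : (U₁ * C * V₁ᴴ)ᴴ * (U₁ * C * V₁ᴴ) = V₁ * (C * C) * V₁ᴴ := by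
      simp only [Matrix.conjTranspose_mul, Matrix.conjTranspose_conjTranspose, hCh]
      simp only [Matrix.mul_assoc]
      rw [← Matrix.mul_assoc U₁ᴴ U₁ (C * V₁ᴴ), hU₁, Matrix.one_mul]
    have e2 : (U₂ * S * V₁ᴴ)ᴴ * (U₂ * S * V₁ᴴ) = V₁ * (S * S) * V₁ᴴ := by
      simp only [Matrix.conjTranspose_mul, Matrix.conjTranspose_conjTranspose, hSh]
      simp only [Matrix.mul_assoc]
      rw [← Matrix.mul_assoc U₂ᴴ U₂ (S * V₁ᴴ), hU₂, Matrix.one_mul]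
    rw [e1, e2]
    have : C * C + S * S
        = Matrix.diagonal (fun i : Fin n => if (i : ℕ) < r then (1 : ℂ) else 0) := by
      rw [hC, hS, Matrix.diagonal_mul_diagonal, Matrix.diagonal_mul_diagonal,
        Matrix.diagonal_add]
      ext i j
      rcases eq_or_ne i j with rfl | hij
      · by_cases h : (i : ℕ) < r
        · simp only [Matrix.diagonal_apply_eq, Pi.add_apply, h, if_true,
            ← Complex.ofReal_sin, ← Complex.ofReal_cos, ← Complex.ofReal_mul,
            ← Complex.ofReal_add]
          norm_cast
          nlinarith [Real.sin_sq_add_cos_sq (θ i)]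
        · simp [Matrix.diagonal_apply_eq, h]
      · simp [Matrix.diagonal_apply_ne _ hij]
    rw [← this]
    noncomm_ring
  -- B = V₁ * diagonal d * V₁ᴴ
  have hBeq : B = V₁ * Matrix.diagonal d * V₁ᴴ := by
    rw [hB, hH₁, hH₂, hAA]
    have h1 : (1 : Matrix (Fin n) (Fin n) ℂ) = V₁ * 1 * V₁ᴴ := by
      rw [Matrix.mul_one, hVus]
    rw [h1]
    have key : S - C + (μ : ℂ) •
        ((1 : Matrix (Fin n) (Fin n) ℂ)
          - Matrix.diagonal (fun i : Fin n => if (i : ℕ) < r then (1 : ℂ) else 0))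
        = Matrix.diagonal d := by
      rw [hC, hS]
      ext i j
      rcases eq_or_ne i j with rfl | hij
      · by_cases h : (i : ℕ) < r <;>
          simp [hd, h, Matrix.diagonal_apply_eq, Matrix.one_apply_eq, Complex.ofReal_sub,
            ← Complex.ofReal_sin, ← Complex.ofReal_cos]
      · simp [Matrix.diagonal_apply_ne _ hij, Matrix.one_apply_ne hij]
    rw [← key]
    simp only [Matrix.mul_sub, Matrix.sub_mul, Matrix.mul_smul, Matrix.smul_mul,
      Matrix.mul_add, Matrix.add_mul, smul_sub, Matrix.mul_assoc]
  refine ⟨?_, hBeq, ?_⟩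
  · rw [Matrix.IsHermitian, hBeq]
    simp only [Matrix.conjTranspose_mul, Matrix.conjTranspose_conjTranspose,
      Matrix.diagonal_conjTranspose]
    have : star d = d := by
      funext i
      by_cases h : (i : ℕ) < r <;>
        simp [hd, h, Pi.star_apply, Complex.conj_ofReal, Complex.ofReal_sub,
          ← Complex.ofReal_sin, ← Complex.ofReal_cos]
    rw [this, ← Matrix.mul_assoc]
  · -- spectrum
    have hspec : spectrum ℂ B = Set.range d := by
      rw [hBeq, ← spectrum_diagonal d, ← Matrix.star_eq_conjTranspose V₁]
      exact Unitary.spectrum_star_right_conjugate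
        (U := (⟨V₁, hV₁⟩ : unitary (Matrix (Fin n) (Fin n) ℂ)))
    rw [hspec]
    rintro x ⟨i, rfl⟩
    by_cases h : (i : ℕ) < r
    · left
      refine ⟨Real.sin (θ i) - Real.cos (θ i), ?_, by simp [hd, h]⟩
      obtain ⟨h0, h1⟩ := hθ i
      have hs0 : 0 ≤ Real.sin (θ i) := Real.sin_nonneg_of_nonneg_of_le_pi h0
        (h1.trans (by linarith [Real.pi_pos]))
      have hc0 : 0 ≤ Real.cos (θ i) := Real.cos_nonneg_of_mem_Icc
        ⟨by linarith [Real.pi_pos], h1⟩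
      have hs1 : Real.sin (θ i) ≤ 1 := Real.sin_le_one _
      have hc1 : Real.cos (θ i) ≤ 1 := Real.cos_le_one _
      constructor <;> simp <;> linarith
    · right
      simp [hd, h]
end

section
/- Let A = [A₁; A₂] be a 2n×n matrix with orthonormal columns (A*A = I), with polar decompositions A₁ = W₁H₁ and A₂ = W₂H₂ (Hᵢ = (Aᵢ*Aᵢ)^{1/2}). Then B = H₂ − H₁ is Hermitian with spectrum contained in [−1, 1], and H₁ = f(B), H₂ = g(B), where f(z) = (1/2)(−z + √(2 − z²)) and g(z) = (1/2)(z + √(2 − z²)) are applied as matrix functions to the Hermitian matrix B. -/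
open scoped Matrix ComplexOrder

/-- The positive semidefinite square root of a positive semidefinite matrix
(the definition `Matrix.PosSemidef.sqrt` of Mathlib, Dec 2024, since removed). -/
noncomputable def Matrix.PosSemidef.sqrt {n : Type*} [Fintype n] [DecidableEq n]
    {𝕜 : Type*} [RCLike 𝕜] {A : Matrix n n 𝕜} (hA : A.PosSemidef) : Matrix n n 𝕜 :=
  hA.1.eigenvectorUnitary.1 * Matrix.diagonal ((↑) ∘ (√·) ∘ hA.1.eigenvalues) *
    (star hA.1.eigenvectorUnitary : Matrix n n 𝕜)

lemma sqrt_eq_cfc' {n : ℕ} {S : Matrix (Fin n) (Fin n) ℂ} (hS : S.PosSemidef) :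
    hS.sqrt = cfc Real.sqrt S := by
  rw [Matrix.IsHermitian.cfc_eq hS.1, Matrix.IsHermitian.cfc, Unitary.conjStarAlgAut_apply]
  rfl

-- spectrum ℂ = coe '' spectrum ℝ for a Hermitian matrix
lemma spectrum_complex_eq {n : ℕ} {B : Matrix (Fin n) (Fin n) ℂ} (hB : B.IsHermitian) :
    spectrum ℂ B = (fun x : ℝ => (x : ℂ)) '' spectrum ℝ B := by
  rw [hB.spectrum_eq_image_range, hB.spectrum_real_eq_range_eigenvalues]
  rfl

-- key scalar identity
lemma scalar_f {x : ℝ} (hx : x ∈ Set.Icc (0:ℝ) 1) :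
    (-(Real.sqrt (1 - x) - Real.sqrt x)
      + Real.sqrt (2 - (Real.sqrt (1 - x) - Real.sqrt x) ^ 2)) / 2 = Real.sqrt x := by
  obtain ⟨h0, h1⟩ := hx
  set a := Real.sqrt x with ha'
  set b := Real.sqrt (1 - x) with hb'
  have ha : a ^ 2 = x := Real.sq_sqrt h0
  have hb : b ^ 2 = 1 - x := Real.sq_sqrt (by linarith)
  have key : 2 - (b - a) ^ 2 = (a + b) ^ 2 := by nlinarith [ha, hb]
  rw [key, Real.sqrt_sq (by positivity)]
  ring

lemma scalar_g {x : ℝ} (hx : x ∈ Set.Icc (0:ℝ) 1) :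
    ((Real.sqrt (1 - x) - Real.sqrt x)
      + Real.sqrt (2 - (Real.sqrt (1 - x) - Real.sqrt x) ^ 2)) / 2 = Real.sqrt (1 - x) := by
  obtain ⟨h0, h1⟩ := hx
  set a := Real.sqrt x with ha'
  set b := Real.sqrt (1 - x) with hb'
  have ha : a ^ 2 = x := Real.sq_sqrt h0
  have hb : b ^ 2 = 1 - x := Real.sq_sqrt (by linarith)
  have key : 2 - (b - a) ^ 2 = (a + b) ^ 2 := by nlinarith [ha, hb]
  rw [key, Real.sqrt_sq (by positivity)]
  ring

/-- Let `A = [A₁; A₂]` be a `2n × n` matrix with orthonormal columns, with Hermitian polar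
factors `Hᵢ = (AᵢᴴAᵢ)^{1/2}`.  Then `B = H₂ − H₁` is Hermitian with spectrum in `[−1,1]`,
and `H₁ = f(B)`, `H₂ = g(B)` as matrix functions of the Hermitian matrix `B`, where
`f z = (−z + √(2 − z²))/2` and `g z = (z + √(2 − z²))/2`. -/
theorem stmt_14 (n : ℕ) (A₁ A₂ : Matrix (Fin n) (Fin n) ℂ)
    (horth : (Matrix.fromRows A₁ A₂)ᴴ * (Matrix.fromRows A₁ A₂) = 1)
    (H₁ H₂ B : Matrix (Fin n) (Fin n) ℂ)
    (hH₁ : H₁ = (Matrix.posSemidef_conjTranspose_mul_self A₁).sqrt)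
    (hH₂ : H₂ = (Matrix.posSemidef_conjTranspose_mul_self A₂).sqrt)
    (hB : B = H₂ - H₁) :
    ∃ hBh : B.IsHermitian,
      spectrum ℂ B ⊆ (fun x : ℝ => (x : ℂ)) '' Set.Icc (-1 : ℝ) 1 ∧
      H₁ = hBh.cfc (fun z => (-z + Real.sqrt (2 - z ^ 2)) / 2) ∧
      H₂ = hBh.cfc (fun z => (z + Real.sqrt (2 - z ^ 2)) / 2) := by
  have hS : (A₁ᴴ * A₁).PosSemidef := Matrix.posSemidef_conjTranspose_mul_self A₁
  have hT : (A₂ᴴ * A₂).PosSemidef := Matrix.posSemidef_conjTranspose_mul_self A₂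
  have hSsa : IsSelfAdjoint (A₁ᴴ * A₁) := hS.1
  have hsum : A₁ᴴ * A₁ + A₂ᴴ * A₂ = 1 := by
    rwa [Matrix.conjTranspose_fromRows_eq_fromCols_conjTranspose,
      Matrix.fromCols_mul_fromRows] at horth
  -- T = 1 - S as a cfc
  have hTeq : A₂ᴴ * A₂ = cfc (fun x : ℝ => 1 - x) (A₁ᴴ * A₁) := by
    rw [cfc_sub (fun _ => (1:ℝ)) (fun x => x) _ (by fun_prop) (by fun_prop),
      cfc_const 1 _ hSsa, cfc_id' ℝ (A₁ᴴ * A₁) hSsa, map_one]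
    exact eq_sub_of_add_eq' hsum
  -- spectrum of S in [0,1]
  have hspecS : spectrum ℝ (A₁ᴴ * A₁) ⊆ Set.Icc (0:ℝ) 1 := by
    intro x hx
    constructor
    · rw [hS.1.spectrum_real_eq_range_eigenvalues] at hx
      obtain ⟨i, rfl⟩ := hx
      exact hS.eigenvalues_nonneg i
    · have h1x : (1 - x) ∈ spectrum ℝ (A₂ᴴ * A₂) := by
        rw [hTeq, cfc_map_spectrum (fun x : ℝ => 1 - x) _ hSsa (by fun_prop)]
        exact ⟨x, hx, rfl⟩
      rw [hT.1.spectrum_real_eq_range_eigenvalues] at h1x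
      obtain ⟨i, hi⟩ := h1x
      have := hT.eigenvalues_nonneg i
      linarith [hi ▸ this]
  -- H₁, H₂, B as cfc of S
  have hH₁' : H₁ = cfc Real.sqrt (A₁ᴴ * A₁) := by rw [hH₁]; exact sqrt_eq_cfc' hS
  have hH₂' : H₂ = cfc (fun x : ℝ => Real.sqrt (1 - x)) (A₁ᴴ * A₁) := by
    rw [hH₂, sqrt_eq_cfc' hT, hTeq,
      ← cfc_comp' Real.sqrt (fun x : ℝ => 1 - x) _ (by fun_prop) (by fun_prop)]
  have hBcfc : B = cfc (fun x : ℝ => Real.sqrt (1 - x) - Real.sqrt x) (A₁ᴴ * A₁) := by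
    rw [hB, hH₁', hH₂', cfc_sub (fun x : ℝ => Real.sqrt (1 - x)) Real.sqrt _
      (by fun_prop) (by fun_prop)]
  have hBh : B.IsHermitian := by
    rw [hB, hH₁, hH₂]
    rw [sqrt_eq_cfc', sqrt_eq_cfc']
    exact IsSelfAdjoint.sub (cfc_predicate _ _) (cfc_predicate _ _)
  -- spectrum of B
  have hspecB : spectrum ℝ B ⊆ Set.Icc (-1:ℝ) 1 := by
    rw [hBcfc, cfc_map_spectrum (fun x : ℝ => Real.sqrt (1 - x) - Real.sqrt x) _ hSsa
      (by fun_prop)]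
    rintro - ⟨x, hx, rfl⟩
    obtain ⟨h0, h1⟩ := hspecS hx
    have hs1 : Real.sqrt x ≤ 1 := Real.sqrt_le_one.mpr h1
    have hs2 : Real.sqrt (1 - x) ≤ 1 := Real.sqrt_le_one.mpr (by linarith)
    have hs3 : 0 ≤ Real.sqrt x := Real.sqrt_nonneg x
    have hs4 : 0 ≤ Real.sqrt (1 - x) := Real.sqrt_nonneg _
    constructor <;> dsimp only <;> linarith
  refine ⟨hBh, ?_, ?_, ?_⟩
  · rw [spectrum_complex_eq hBh]
    exact Set.image_mono hspecB
  · rw [← Matrix.IsHermitian.cfc_eq hBh, hBcfc,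
      ← cfc_comp' (fun z => (-z + Real.sqrt (2 - z ^ 2)) / 2)
        (fun x : ℝ => Real.sqrt (1 - x) - Real.sqrt x) _ (by fun_prop) (by fun_prop)]
    rw [hH₁']
    apply cfc_congr
    intro x hx
    exact (scalar_f (hspecS hx)).symm
  · rw [← Matrix.IsHermitian.cfc_eq hBh, hBcfc,
      ← cfc_comp' (fun z => (z + Real.sqrt (2 - z ^ 2)) / 2)
        (fun x : ℝ => Real.sqrt (1 - x) - Real.sqrt x) _ (by fun_prop) (by fun_prop)]
    rw [hH₂']
    apply cfc_congr
    intro x hx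
    exact (scalar_g (hspecS hx)).symm
end
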